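/- arXiv:1912.11576 — 5 statements merged into one kernel-verified Lean document; each statement's English description precedes it below -/
import Mathlib

section
/- Let p ∈ (0,1], q ∈ (0,1), r > 0, and define for s ≥ 0 the coverage probability P(s) = (1/(1 - p·q))·exp(-s·p·(r + q)) - (p·q + p·r)/((1 - p·q)·(p·r + 1))·exp(-s·(p·r + 1)). Then P is strictly decreasing in s on (0, ∞). -/
/-! The exponents `a = p(r+q)` and `b = pr+1` satisfy `b - a = 1 - pq > 0`, and the two
coefficients are normalised so that `a·A = b·B`. Hence `P'(s) = a·A·(e^{-bs} - e^{-as})`,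
which is negative for `s > 0`. -/

open Real Set

theorem hasDerivAt_exp_neg_mul (k s : ℝ) :
    HasDerivAt (fun s : ℝ => exp (-s * k)) (-k * exp (-s * k)) s := by
  have h := ((hasDerivAt_neg s).mul_const k).exp
  simp only [neg_one_mul, mul_comm (exp _)] at h
  exact h

theorem strictAntiOn_sub_exp_neg_mul {a b A B : ℝ} (hab : a < b) (hAB : a * A = b * B)
    (hA : 0 < a * A) :
    StrictAntiOn (fun s : ℝ => A * exp (-s * a) - B * exp (-s * b)) (Ioi 0) := by
  apply strictAntiOn_of_hasDerivWithinAt_neg (convex_Ioi 0) (by fun_prop)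
    (f' := fun s => a * A * (exp (-s * b) - exp (-s * a)))
  · intro s _
    have h := ((hasDerivAt_exp_neg_mul a s).const_mul A).sub
      ((hasDerivAt_exp_neg_mul b s).const_mul B)
    refine (h.congr_deriv ?_).hasDerivWithinAt
    linear_combination -exp (-s * b) * hAB
  · intro s hs
    rw [interior_Ioi] at hs
    have hexp : exp (-s * b) < exp (-s * a) :=
      exp_lt_exp.mpr (mul_lt_mul_of_neg_left hab (neg_lt_zero.mpr hs))
    exact mul_neg_of_pos_of_neg hA (sub_neg.mpr hexp)

theorem coverage_strictAnti_in_nearfield_intensity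
    (p q r : ℝ) (hp : p ∈ Set.Ioc (0:ℝ) 1) (hq : q ∈ Set.Ioo (0:ℝ) 1) (hr : 0 < r) :
    StrictAntiOn
      (fun s : ℝ =>
        (1 / (1 - p * q)) * Real.exp (-s * p * (r + q)) -
          (p * q + p * r) / ((1 - p * q) * (p * r + 1)) * Real.exp (-s * (p * r + 1)))
      (Set.Ioi (0:ℝ)) := by
  obtain ⟨hp0, hp1⟩ := hp
  obtain ⟨hq0, hq1⟩ := hq
  have hpq : 0 < 1 - p * q := by nlinarith
  have hb : 0 < p * r + 1 := by positivity
  have h := strictAntiOn_sub_exp_neg_mul (a := p * (r + q)) (b := p * r + 1)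
    (A := 1 / (1 - p * q)) (B := (p * q + p * r) / ((1 - p * q) * (p * r + 1)))
    (by linarith) (by field_simp; ring) (by positivity)
  simpa only [mul_assoc] using h
end

section
/- Let q ∈ (0,1), r > 0, s > 0 be fixed. Define P(p) = (1/(1 - p·q))·exp(-s·p·(r + q)) - (p·q + p·r)/((1 - p·q)·(p·r + 1))·exp(-s·(p·r + 1)) for p ∈ (0,1]. Then P is strictly decreasing in p. -/
/-!
Since `(p q + p r) / ((1 - p q)(p r + 1)) = 1 / (1 - p q) - 1 / (p r + 1)`, the coverage
probability splits as `exp (-s p r) · expChord s (p q) + exp (-s (p r + 1)) / (p r + 1)`.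
Up to the factor `s`, `expChord s x` is the slope of the secant of `exp` through `-s` and `-s x`;
by strict convexity of `exp` it is positive and strictly decreasing in `x < 1`. Both summands are
therefore strictly decreasing in `p`.
-/

open Real Set

noncomputable def expChord (s x : ℝ) : ℝ := (exp (-s * x) - exp (-s)) / (1 - x)

theorem expChord_pos {s x : ℝ} (hs : 0 < s) (hx : x < 1) : 0 < expChord s x :=
  div_pos (sub_pos.2 (exp_lt_exp.2 (by nlinarith))) (sub_pos.2 hx)

theorem expChord_eq_mul_secant {s x : ℝ} (hs : s ≠ 0) (hx : x ≠ 1) :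
    expChord s x = s * ((exp (-s * x) - exp (-s)) / (-s * x - -s)) := by
  have hsx : -s * x - -s = s * (1 - x) := by ring
  rw [expChord, hsx]
  field_simp

theorem strictAntiOn_expChord {s : ℝ} (hs : 0 < s) : StrictAntiOn (expChord s) (Iio 1) := by
  intro x (hx : x < 1) y (hy : y < 1) hxy
  have hsecant := strictConvexOn_exp.secant_strict_mono (a := -s) (mem_univ _) (mem_univ (-s * y))
    (mem_univ (-s * x)) (by nlinarith) (by nlinarith) (by nlinarith)
  rw [expChord_eq_mul_secant hs.ne' hx.ne, expChord_eq_mul_secant hs.ne' hy.ne]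
  exact mul_lt_mul_of_pos_left hsecant hs

theorem strictAntiOn_exp_neg_mul_div {s : ℝ} (hs : 0 ≤ s) :
    StrictAntiOn (fun t => exp (-s * (t + 1)) / (t + 1)) (Ioi (-1)) := by
  intro t (ht : -1 < t) u (hu : -1 < u) htu
  calc exp (-s * (u + 1)) / (u + 1)
      ≤ exp (-s * (t + 1)) / (u + 1) :=
        div_le_div_of_nonneg_right (exp_le_exp.2 (by nlinarith)) (by linarith)
    _ < exp (-s * (t + 1)) / (t + 1) :=
        div_lt_div_of_pos_left (exp_pos _) (by linarith) (by linarith)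

theorem coverage_eq_expChord {q r s p : ℝ} (hpq : p * q ≠ 1) (hpr : p * r + 1 ≠ 0) :
    (1 / (1 - p * q)) * exp (-s * p * (r + q)) -
        (p * q + p * r) / ((1 - p * q) * (p * r + 1)) * exp (-s * (p * r + 1)) =
      exp (-s * (p * r)) * expChord s (p * q) + exp (-s * (p * r + 1)) / (p * r + 1) := by
  have hsplit₁ : exp (-s * p * (r + q)) = exp (-s * (p * r)) * exp (-s * (p * q)) := by
    rw [← exp_add]; ring_nf
  have hsplit₂ : exp (-s * (p * r + 1)) = exp (-s * (p * r)) * exp (-s) := by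
    rw [← exp_add]; ring_nf
  rw [expChord, hsplit₁, hsplit₂]
  field_simp
  ring

theorem coverage_strictAnti_in_alignment_prob
    (q r s : ℝ) (hq : q ∈ Set.Ioo (0:ℝ) 1) (hr : 0 < r) (hs : 0 < s) :
    StrictAntiOn
      (fun p : ℝ =>
        (1 / (1 - p * q)) * Real.exp (-s * p * (r + q)) -
          (p * q + p * r) / ((1 - p * q) * (p * r + 1)) * Real.exp (-s * (p * r + 1)))
      (Set.Ioc (0:ℝ) 1) := by
  obtain ⟨hq₀, hq₁⟩ := hq
  rintro p₁ ⟨hp₁, -⟩ p₂ ⟨hp₂, hp₂'⟩ hp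
  have hpq : p₁ * q < p₂ * q := mul_lt_mul_of_pos_right hp hq₀
  have hpr : p₁ * r < p₂ * r := mul_lt_mul_of_pos_right hp hr
  have hp₂q : p₂ * q < 1 := by nlinarith
  have hp₁r : 0 < p₁ * r := by positivity
  have hp₂r : 0 < p₂ * r := by positivity
  simp only
  rw [coverage_eq_expChord (hpq.trans hp₂q).ne (by linarith),
    coverage_eq_expChord hp₂q.ne (by linarith)]
  refine add_lt_add (mul_lt_mul'' ?_ ?_ (exp_pos _).le (expChord_pos hs hp₂q).le) ?_
  · exact exp_lt_exp.2 (by nlinarith)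
  · exact strictAntiOn_expChord hs (hpq.trans hp₂q) hp₂q hpq
  · exact strictAntiOn_exp_neg_mul_div hs.le (by linarith : -1 < p₁ * r)
      (by linarith : -1 < p₂ * r) hpr
end

section
/- For p ∈ (0,1], q ∈ (0,1), r > 0, s ≥ 0, the value P(s) = (1/(1 - p·q))·exp(-s·p·(r + q)) - (p·q + p·r)/((1 - p·q)·(p·r + 1))·exp(-s·(p·r + 1)) lies in the interval [0, 1]. -/
open Real Set

lemma key_bernoulli (a b s : ℝ) (ha : 0 < a) (hab : a ≤ b) (hs : 0 ≤ s) :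
    a - b + b * Real.exp (-(a*s)) ≤ a * Real.exp (-(b*s)) := by
  have hz : (-1:ℝ) ≤ Real.exp (-(a*s)) - 1 := by nlinarith [Real.exp_pos (-(a*s))]
  have ht : (1:ℝ) ≤ b / a := (one_le_div ha).mpr hab
  have hB := one_add_mul_self_le_rpow_one_add hz ht
  rw [add_sub_cancel] at hB
  have h2 : Real.exp (-(a*s)) ^ (b/a) = Real.exp (-(b*s)) := by
    rw [← Real.exp_mul]
    congr 1
    field_simp
  rw [h2] at hB
  have hba : a * (b / a) = b := by field_simp
  nlinarith [mul_le_mul_of_nonneg_left hB ha.le, hba]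

theorem coverage_mem_Icc
    (p q r s : ℝ) (hp : p ∈ Set.Ioc (0:ℝ) 1) (hq : q ∈ Set.Ioo (0:ℝ) 1)
    (hr : 0 < r) (hs : 0 ≤ s) :
    (1 / (1 - p * q)) * Real.exp (-s * p * (r + q)) -
      (p * q + p * r) / ((1 - p * q) * (p * r + 1)) * Real.exp (-s * (p * r + 1)) ∈
      Set.Icc (0:ℝ) 1 := by
  obtain ⟨hp0, hp1⟩ := hp
  obtain ⟨hq0, hq1⟩ := hq
  have hpq : p * q < 1 := by nlinarith
  have hD : 0 < 1 - p * q := by linarith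
  have hE : (1:ℝ) ≤ p * r + 1 := by nlinarith
  have hE0 : 0 < p * r + 1 := by linarith
  set a := p * (r + q) with ha_def
  set b := p * r + 1 with hb_def
  have ha0 : 0 < a := by positivity
  have hab : a ≤ b := by nlinarith
  have hx : -s * p * (r + q) = -(a * s) := by ring
  have hy : -s * (p * r + 1) = -(b * s) := by ring
  rw [hx, hy]
  have hea := Real.exp_pos (-(a*s))
  have heb := Real.exp_pos (-(b*s))
  have hle : Real.exp (-(b*s)) ≤ Real.exp (-(a*s)) := by
    apply Real.exp_le_exp.mpr; nlinarith
  constructor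
  · -- lower bound
    have hB_le_A : (p * q + p * r) / ((1 - p * q) * (p * r + 1)) ≤ 1 / (1 - p * q) := by
      rw [div_le_div_iff₀ (by positivity) hD]
      nlinarith
    have hBnn : 0 ≤ (p * q + p * r) / ((1 - p * q) * (p * r + 1)) := by positivity
    have := mul_le_mul hB_le_A hle heb.le (by positivity)
    linarith
  · -- upper bound
    have hkey := key_bernoulli a b s ha0 hab hs
    -- goal: A e^{-as} - B e^{-bs} ≤ 1, where pq + pr = a
    have hpa : p * q + p * r = a := by rw [ha_def]; ring
    rw [hpa]
    rw [div_mul_eq_mul_div, div_mul_eq_mul_div, div_sub_div _ _ hD.ne' (by positivity), div_le_one (by positivity)]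
    have hba : b - a = 1 - p * q := by rw [ha_def, hb_def]; ring
    -- b e^{-as} - a e^{-bs} ≤ b - a ≤ (b-a) b
    nlinarith [mul_le_mul_of_nonneg_left hkey hD.le,
      mul_nonneg (mul_nonneg hD.le hD.le) (sub_nonneg.mpr hE)]
end

section
/- Let β₁ ∈ (0, 2] and T > 0. Then the function F(λ) = λπ·∫₀^{d₀²} exp(-λπ·c·u·(1 + ∫₁^{d₀²/u} T/(T + t^{β₁/2}) dt)) du + exp(-λπ d₀)/(λπ d₀), with c > 0 and d₀ > 0 fixed, tends to 0 as λ → ∞. -/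
/-!
Write `φ(u) = 1 + ∫₁^{d₀²/u} T/(T + t^{β₁/2}) dt`. Since `t^{β₁/2} ≤ t` on `[1, ∞)`, the inner
integral is at least `T/(T+1) · log (d₀²/u)`, so `φ ≥ 1` on `(0, d₀²]` and `φ → ∞` as `u → 0⁺`.
If `φ ≥ M` on `(0, ε)`, the integrand is at most `exp(-scMu)` there and at most `exp(-scε)` on
`[ε, d₀²]`, so with `s = λπ` the first term is at most `1/(cM) + s d₀² exp(-scε)`, whose limsup is
`1/(cM)`; as `M` is arbitrary the first term tends to `0`. The second term is `e^{-x}/x` at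
`x = λπd₀`.
-/

open Real Filter intervalIntegral

section

open MeasureTheory Set Topology

theorem continuousOn_div_add_rpow {T : ℝ} (hT : 0 < T) (p : ℝ) :
    ContinuousOn (fun t : ℝ => T / (T + t ^ p)) (Ioi 0) := by
  refine continuousOn_const.div (continuousOn_const.add ?_) fun t ht => ?_
  · exact fun t ht => (continuousAt_rpow_const t p (Or.inl (ne_of_gt ht))).continuousWithinAt
  · have := rpow_nonneg (le_of_lt (mem_Ioi.mp ht)) p
    positivity

theorem integral_div_add_rpow_nonneg {T p x : ℝ} (hT : 0 ≤ T) (hx : 1 ≤ x) :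
    0 ≤ ∫ t in (1:ℝ)..x, T / (T + t ^ p) :=
  integral_nonneg hx fun t ht => by
    have := rpow_nonneg (zero_le_one.trans ht.1) p
    positivity

theorem mul_log_le_integral_div_add_rpow {T p x : ℝ} (hT : 0 < T) (hp : p ≤ 1) (hx : 1 ≤ x) :
    T / (T + 1) * log x ≤ ∫ t in (1:ℝ)..x, T / (T + t ^ p) := by
  have hpos : uIcc 1 x ⊆ Ioi 0 := by
    rw [uIcc_of_le hx]
    exact fun t ht => zero_lt_one.trans_le ht.1
  rw [← div_one x, ← integral_inv_of_pos one_pos (by linarith), div_one,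
    ← intervalIntegral.integral_const_mul]
  refine integral_mono_on hx ?_ ((continuousOn_div_add_rpow hT p).mono hpos).intervalIntegrable
    fun t ht => ?_
  · exact (continuousOn_const.mul (continuousOn_inv₀.mono fun t ht => ne_of_gt (hpos ht)))
      |>.intervalIntegrable
  · have ht0 : 0 < t := zero_lt_one.trans_le ht.1
    have hle : t ^ p ≤ t := by
      simpa using rpow_le_rpow_of_exponent_le ht.1 hp
    have := rpow_nonneg ht0.le p
    calc T / (T + 1) * t⁻¹ = T / ((T + 1) * t) := by field_simp
      _ ≤ T / (T + t ^ p) := by gcongr; nlinarith [ht.1]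

theorem tendsto_integral_div_add_rpow_atTop {T p : ℝ} (hT : 0 < T) (hp : p ≤ 1) :
    Tendsto (fun x => ∫ t in (1:ℝ)..x, T / (T + t ^ p)) atTop atTop :=
  tendsto_atTop_mono' _
    ((eventually_ge_atTop 1).mono fun _ hx => mul_log_le_integral_div_add_rpow hT hp hx)
    (tendsto_log_atTop.const_mul_atTop (by positivity))

theorem integral_exp_neg_mul_le {A a : ℝ} (hA : 0 < A) (ha : 0 ≤ a) :
    ∫ u in (0:ℝ)..a, exp (-(A * u)) ≤ 1 / A := by
  have hint : IntegrableOn (fun u => exp (-A * u)) (Ioi 0) := by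
    simpa using exp_neg_integrableOn_Ioi 0 hA
  calc ∫ u in (0:ℝ)..a, exp (-(A * u)) = ∫ u in Ioc 0 a, exp (-A * u) := by
        simp only [integral_of_le ha, neg_mul]
    _ ≤ ∫ u in Ioi 0, exp (-A * u) :=
        setIntegral_mono_set hint (ae_of_all _ fun _ => (exp_pos _).le)
          Ioc_subset_Ioi_self.eventuallyLE
    _ = 1 / A := by
        rw [integral_exp_mul_Ioi (by linarith), mul_zero, exp_zero, neg_div, div_neg, neg_neg]

theorem exp_neg_le_add_of_le {s c M ε u v : ℝ} (hs : 0 ≤ s) (hc : 0 ≤ c) (hu : 0 < u)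
    (hv : 1 ≤ v) (hvM : u < ε → M ≤ v) :
    exp (-(s * c * u * v)) ≤ exp (-(s * c * M * u)) + exp (-(s * c * ε)) := by
  have hsc : 0 ≤ s * c := by positivity
  by_cases huε : u < ε
  · refine le_add_of_le_of_nonneg (exp_le_exp.2 ?_) (exp_pos _).le
    have := mul_le_mul_of_nonneg_left (hvM huε) (mul_nonneg hsc hu.le)
    linarith
  · refine le_add_of_nonneg_of_le (exp_pos _).le (exp_le_exp.2 ?_)
    have : ε ≤ u * v := (not_lt.1 huε).trans (le_mul_of_one_le_right hu.le hv)
    have := mul_le_mul_of_nonneg_left this hsc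
    linarith

theorem mul_integral_exp_neg_le {φ : ℝ → ℝ} {a c s M ε : ℝ} (ha : 0 ≤ a) (hc : 0 < c)
    (hs : 0 < s) (hM : 0 < M) (hφ_one : ∀ u ∈ Ioc 0 a, 1 ≤ φ u) (hφM : ∀ u ∈ Ioo 0 ε, M ≤ φ u) :
    s * ∫ u in (0:ℝ)..a, exp (-(s * c * u * φ u)) ≤ 1 / (c * M) + s * a * exp (-(s * c * ε)) := by
  -- `integral_mono_of_nonneg` needs no integrability of the (possibly non-measurable) integrand.
  have hdom : ∫ u in (0:ℝ)..a, exp (-(s * c * u * φ u))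
      ≤ ∫ u in (0:ℝ)..a, (exp (-(s * c * M * u)) + exp (-(s * c * ε))) := by
    rw [integral_of_le ha, integral_of_le ha]
    refine integral_mono_of_nonneg (ae_of_all _ fun _ => (exp_pos _).le)
      (Continuous.integrableOn_Ioc (by fun_prop))
      ((ae_restrict_mem measurableSet_Ioc).mono fun u hu => ?_)
    exact exp_neg_le_add_of_le hs.le hc.le hu.1 (hφ_one u hu) fun h => hφM u ⟨hu.1, h⟩
  rw [intervalIntegral.integral_add ((by fun_prop : Continuous _).intervalIntegrable _ _)
    intervalIntegrable_const, intervalIntegral.integral_const, smul_eq_mul, sub_zero] at hdom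
  have hexp := integral_exp_neg_mul_le (show 0 < s * c * M by positivity) ha
  calc s * ∫ u in (0:ℝ)..a, exp (-(s * c * u * φ u))
      ≤ s * (1 / (s * c * M) + a * exp (-(s * c * ε))) := by gcongr; linarith
    _ = 1 / (c * M) + s * a * exp (-(s * c * ε)) := by field_simp

theorem tendsto_mul_integral_exp_neg_mul_atTop {φ : ℝ → ℝ} {a c : ℝ} (ha : 0 ≤ a) (hc : 0 < c)
    (hφ_one : ∀ u ∈ Ioc 0 a, 1 ≤ φ u) (hφ : Tendsto φ (𝓝[>] 0) atTop) :
    Tendsto (fun s => s * ∫ u in (0:ℝ)..a, exp (-(s * c * u * φ u))) atTop (𝓝 0) := by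
  refine tendsto_order.2 ⟨fun b hb => ?_, fun b hb => ?_⟩
  · filter_upwards [eventually_ge_atTop 0] with s hs
    exact hb.trans_le (mul_nonneg hs (integral_nonneg ha fun _ _ => (exp_pos _).le))
  · obtain ⟨ε, hε, hφM⟩ :=
      (nhdsGT_basis 0).eventually_iff.1 (hφ.eventually_ge_atTop (2 / (c * b)))
    have htail : Tendsto (fun s => s * a * exp (-(s * c * ε))) atTop (𝓝 0) := by
      simpa [mul_comm, mul_left_comm, mul_assoc] using
        (tendsto_rpow_mul_exp_neg_mul_atTop_nhds_zero 1 (c * ε) (by positivity)).const_mul a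
    filter_upwards [htail.eventually_lt_const (half_pos hb), eventually_gt_atTop 0]
      with s hs_tail hs
    calc _ ≤ 1 / (c * (2 / (c * b))) + s * a * exp (-(s * c * ε)) :=
          mul_integral_exp_neg_le ha hc hs (by positivity) hφ_one hφM
      _ < b / 2 + b / 2 := by
          rw [show 1 / (c * (2 / (c * b))) = b / 2 by field_simp]
          linarith
      _ = b := add_halves b

theorem tendsto_exp_neg_div_self_atTop : Tendsto (fun x => exp (-x) / x) atTop (𝓝 0) := by
  simpa only [div_eq_mul_inv, mul_zero] using
    tendsto_exp_neg_atTop_nhds_zero.mul tendsto_inv_atTop_zero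

end

theorem coverage_upper_bound_tendsto_zero
    (β₁ T c d₀ : ℝ) (hβ : β₁ ∈ Set.Ioc (0:ℝ) 2) (hT : 0 < T) (hc : 0 < c) (hd : 0 < d₀) :
    Filter.Tendsto
      (fun lam : ℝ =>
        lam * π *
          (∫ u in (0:ℝ)..(d₀ ^ 2),
            Real.exp (-(lam * π * c * u *
              (1 + ∫ t in (1:ℝ)..(d₀ ^ 2 / u), T / (T + t ^ (β₁ / 2)))))) +
        Real.exp (-(lam * π * d₀)) / (lam * π * d₀))
      Filter.atTop (nhds 0) := by
  have hd2 : 0 < d₀ ^ 2 := by positivity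
  have hβ₁ : β₁ / 2 ≤ 1 := by linarith [hβ.2]
  have hφ_one : ∀ u ∈ Set.Ioc 0 (d₀ ^ 2),
      1 ≤ 1 + ∫ t in (1:ℝ)..(d₀ ^ 2 / u), T / (T + t ^ (β₁ / 2)) := fun u hu =>
    le_add_of_nonneg_right (integral_div_add_rpow_nonneg hT.le ((one_le_div hu.1).2 hu.2))
  have hφ : Tendsto (fun u => 1 + ∫ t in (1:ℝ)..(d₀ ^ 2 / u), T / (T + t ^ (β₁ / 2)))
      (nhdsWithin 0 (Set.Ioi 0)) atTop := by
    refine tendsto_atTop_add_const_left _ 1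
      ((tendsto_integral_div_add_rpow_atTop hT hβ₁).comp ?_)
    exact (tendsto_inv_nhdsGT_zero.const_mul_atTop hd2).congr fun u => (div_eq_mul_inv _ u).symm
  have hlam : Tendsto (fun lam : ℝ => lam * π) atTop atTop :=
    tendsto_id.atTop_mul_const pi_pos
  simpa using ((tendsto_mul_integral_exp_neg_mul_atTop hd2.le hc hφ_one hφ).comp hlam).add
    (tendsto_exp_neg_div_self_atTop.comp (hlam.atTop_mul_const hd))
end

section
/- Let q ∈ (0,1), r > 0, s > 0 and p ∈ (0,1]. Then the expression A₁(p) = [(-s·(q+r)·(1-p·q) - q)/(1-p·q)²]·exp(-s·p·(q+r)) + [(s·r·(1-p·q) + q)/(1-p·q)²]·exp(-s·(1 + p·r)) is strictly negative. -/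
open Real

/-!
Put both terms over the common denominator `(1 - p q)² > 0`. Since `p q ≤ 1`, the exponent
`-s (1 + p r)` is at most `-s p (q + r)`, so the second exponential is dominated by the first; its
coefficient is nonnegative, so replacing it by the first exponential only increases the numerator,
which then collapses to `-s q (1 - p q) exp (-s p (q + r)) < 0`.
-/

lemma mul_add_mul_neg_of_add_neg {α : Type*} [Ring α] [LinearOrder α] [IsStrictOrderedRing α]
    {a b x y : α} (hab : a + b < 0) (hb : 0 ≤ b) (hyx : y ≤ x) (hx : 0 < x) :
    a * x + b * y < 0 :=
  calc a * x + b * y ≤ a * x + b * x := by gcongr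
    _ = (a + b) * x := (add_mul a b x).symm
    _ < 0 := mul_neg_of_neg_of_pos hab hx

lemma exp_neg_mul_one_add_le {p q r s : ℝ} (hs : 0 ≤ s) (hpq : p * q ≤ 1) :
    exp (-s * (1 + p * r)) ≤ exp (-s * p * (q + r)) :=
  exp_le_exp.2 <| by nlinarith [mul_nonneg hs (sub_nonneg.2 hpq)]

theorem ase_integrand_deriv_neg
    (p q r s : ℝ) (hp : p ∈ Set.Ioc (0:ℝ) 1) (hq : q ∈ Set.Ioo (0:ℝ) 1)
    (hr : 0 < r) (hs : 0 < s) :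
    ((-s * (q + r) * (1 - p * q) - q) / (1 - p * q) ^ 2) * Real.exp (-s * p * (q + r)) +
      ((s * r * (1 - p * q) + q) / (1 - p * q) ^ 2) * Real.exp (-s * (1 + p * r)) < 0 := by
  obtain ⟨hp0, hp1⟩ := hp
  obtain ⟨hq0, hq1⟩ := hq
  have hpq : p * q < 1 := by nlinarith
  have hD : 0 < 1 - p * q := sub_pos.2 hpq
  have hcoef_sum : (-s * (q + r) * (1 - p * q) - q) + (s * r * (1 - p * q) + q) < 0 := by
    have : 0 < s * q * (1 - p * q) := by positivity
    linarith
  have hnum := mul_add_mul_neg_of_add_neg hcoef_sum (by positivity)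
    (exp_neg_mul_one_add_le (r := r) hs.le hpq.le) (exp_pos _)
  rw [div_mul_eq_mul_div, div_mul_eq_mul_div, ← add_div]
  exact div_neg_of_neg_of_pos hnum (by positivity)
end
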